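/- arXiv:2512.02881 — 2 statements merged into one kernel-verified Lean document; each statement's English description precedes it below -/
import Mathlib

section
/- Let $p > 1$ and let $f : \mathbb{R} \to \mathbb{R}$ be continuous with $f(0) = 0$ such that $s \mapsto f(s)/|s|^{p-1}$ is strictly increasing on $(-\infty,0) \cup (0,\infty)$. Let $F(t) = \int_0^t f(s)\,ds$. Then for all $s \in \mathbb{R}$, $f(s)\,s \geq p\,F(s)$. -/
/-!
For `0 < t ≤ s`, monotonicity of `f t / t ^ (p - 1)` gives `f t ≤ (f s / s ^ (p - 1)) * t ^ (p - 1)`,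
and the right-hand side integrates over `[0, s]` to `f s * s / p`. Negative `s` reduce to this
case via the reflection `t ↦ -f (-t)`, which has the same monotonicity property.
-/

open Set intervalIntegral
open MeasureTheory (volume)

theorem mul_intervalIntegral_le_mul_self {p s : ℝ} {f : ℝ → ℝ} (hp : 0 < p) (hs : 0 < s)
    (hf : IntervalIntegrable f volume 0 s)
    (hmono : MonotoneOn (fun t => f t / t ^ (p - 1)) (Ioc 0 s)) :
    p * ∫ t in (0:ℝ)..s, f t ≤ f s * s := by
  set c := f s / s ^ (p - 1)
  have hbound : ∀ t ∈ Ioo 0 s, f t ≤ c * t ^ (p - 1) := fun t ht =>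
    (div_le_iff₀ (Real.rpow_pos_of_pos ht.1 _)).1 (hmono ⟨ht.1, ht.2.le⟩ ⟨hs, le_rfl⟩ ht.2.le)
  have hpow : ∫ t in (0:ℝ)..s, c * t ^ (p - 1) = c * (s ^ p / p) := by
    rw [integral_const_mul, integral_rpow (Or.inl (by linarith)), sub_add_cancel,
      Real.zero_rpow hp.ne', sub_zero]
  have hint : IntervalIntegrable (fun t => c * t ^ (p - 1)) volume 0 s :=
    (intervalIntegrable_rpow' (by linarith)).const_mul c
  calc p * ∫ t in (0:ℝ)..s, f t ≤ p * ∫ t in (0:ℝ)..s, c * t ^ (p - 1) := by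
        gcongr
        exact integral_mono_on_of_le_Ioo hs.le hf hint hbound
    _ = c * s ^ p := by rw [hpow]; field_simp
    _ = f s * s := by
        simp only [c, Real.rpow_sub_one hs.ne']
        field_simp [(Real.rpow_pos_of_pos hs p).ne']

theorem stmt3_general (p : ℝ) (hp : 1 < p) (f : ℝ → ℝ) (hf : Continuous f)
    (hmono : StrictMonoOn (fun s => f s / |s| ^ (p - 1)) {s : ℝ | s ≠ 0}) :
    ∀ s : ℝ, p * ∫ t in (0:ℝ)..s, f t ≤ f s * s := by
  intro s
  rcases lt_trichotomy s 0 with hs | rfl | hs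
  · have hrefl : MonotoneOn (fun t => -f (-t) / t ^ (p - 1)) (Ioc 0 (-s)) := by
      intro a ha b hb hab
      have := hmono.monotoneOn (a := -b) (b := -a) (neg_ne_zero.2 hb.1.ne')
        (neg_ne_zero.2 ha.1.ne') (neg_le_neg hab)
      simp only [abs_neg, abs_of_pos ha.1, abs_of_pos hb.1] at this
      simp only [neg_div]
      linarith
    have key := mul_intervalIntegral_le_mul_self (f := fun t => -f (-t)) (by linarith)
      (neg_pos.2 hs) ((hf.comp continuous_neg).neg.intervalIntegrable _ _) hrefl
    rw [intervalIntegral.integral_neg, integral_comp_neg, neg_zero, neg_neg, integral_symm,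
      neg_neg] at key
    simpa using key
  · simp
  · refine mul_intervalIntegral_le_mul_self (by linarith) hs (hf.intervalIntegrable _ _) ?_
    intro a ha b hb hab
    have := hmono.monotoneOn ha.1.ne' hb.1.ne' hab
    simpa only [abs_of_pos ha.1, abs_of_pos hb.1] using this

theorem stmt3 (p : ℝ) (hp : 1 < p) (f : ℝ → ℝ) (hf : Continuous f) (hf0 : f 0 = 0)
    (hmono : StrictMonoOn (fun s => f s / |s| ^ (p - 1)) {s : ℝ | s ≠ 0}) :
    ∀ s : ℝ, p * ∫ t in (0:ℝ)..s, f t ≤ f s * s :=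
  stmt3_general p hp f hf hmono
end

section
/- Let $p > 1$ and let $f : \mathbb{R} \to \mathbb{R}$ be continuous such that $s \mapsto f(s)/|s|^{p-1}$ is strictly increasing on $(-\infty,0) \cup (0,\infty)$, and let $F(t) = \int_0^t f(s)\,ds$. Then for every $u \in \mathbb{R}$ and every $t > 0$, $\frac{1-t^p}{p} f(u)\,u + F(tu) - F(u) \geq 0$, with equality if and only if $(1-t)u = 0$. -/
theorem stmt4 (p : ℝ) (hp : 1 < p) (f : ℝ → ℝ) (hf : Continuous f)
    (hmono : StrictMonoOn (fun s => f s / |s| ^ (p - 1)) {s : ℝ | s ≠ 0})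
    (F : ℝ → ℝ) (hF : ∀ t : ℝ, F t = ∫ s in (0:ℝ)..t, f s)
    (u t : ℝ) (ht : 0 < t) :
    0 ≤ (1 - t ^ p) / p * (f u * u) + F (t * u) - F u ∧
      ((1 - t ^ p) / p * (f u * u) + F (t * u) - F u = 0 ↔ (1 - t) * u = 0) := by
  have hp0 : (0:ℝ) < p := lt_trans one_pos hp
  set g : ℝ → ℝ := fun s => (1 - s ^ p) / p * (f u * u) + F (s * u) - F u with hgdef
  have hg1 : g 1 = 0 := by simp [hgdef, Real.one_rpow]
  have hF' : ∀ y : ℝ, HasDerivAt F (f y) y := by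
    intro y
    have hfe : F = fun t => ∫ s in (0:ℝ)..t, f s := funext hF
    rw [hfe]
    exact (intervalIntegral.integral_hasStrictDerivAt_right
      (hf.intervalIntegrable _ _) (hf.stronglyMeasurableAtFilter _ _)
      hf.continuousAt).hasDerivAt
  have hder : ∀ s : ℝ, 0 < s →
      HasDerivAt g (u * f (s * u) - s ^ (p - 1) * (f u * u)) s := by
    intro s hs
    have h1 : HasDerivAt (fun x : ℝ => x ^ p) (p * s ^ (p - 1)) s :=
      Real.hasDerivAt_rpow_const (Or.inl hs.ne')
    have h2 : HasDerivAt (fun x : ℝ => (1 - x ^ p) / p * (f u * u))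
        ((0 - p * s ^ (p - 1)) / p * (f u * u)) s :=
      (((hasDerivAt_const s (1:ℝ)).sub h1).div_const p).mul_const _
    have h3 : HasDerivAt (fun x : ℝ => F (x * u)) (f (s * u) * u) s := by
      have := (hF' (s * u)).comp s ((hasDerivAt_id s).mul_const u)
      simpa [Function.comp_def] using this
    have := (h2.add h3).sub_const (F u)
    convert this using 1
    · rfl
    · rfl
    · rfl
    field_simp
    ring
  -- sign of the derivative when u ≠ 0
  have key : ∀ s : ℝ, 0 < s → u ≠ 0 →
      u * f (s * u) - s ^ (p - 1) * (f u * u)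
        = u * |u| ^ (p - 1) * s ^ (p - 1) *
            (f (s * u) / |s * u| ^ (p - 1) - f u / |u| ^ (p - 1)) := by
    intro s hs hu
    have habs : |s * u| ^ (p - 1) = s ^ (p - 1) * |u| ^ (p - 1) := by
      rw [abs_mul, abs_of_pos hs, Real.mul_rpow hs.le (abs_nonneg u)]
    have hu0 : (0:ℝ) < |u| ^ (p - 1) := Real.rpow_pos_of_pos (abs_pos.mpr hu) _
    have hs0 : (0:ℝ) < s ^ (p - 1) := Real.rpow_pos_of_pos hs _
    rw [habs]
    field_simp
  have hsign_neg : ∀ s : ℝ, 0 < s → s < 1 → u ≠ 0 →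
      u * f (s * u) - s ^ (p - 1) * (f u * u) < 0 := by
    intro s hs hs1 hu
    rw [key s hs hu]
    have hsu : s * u ≠ 0 := mul_ne_zero hs.ne' hu
    have hs0 : (0:ℝ) < s ^ (p - 1) := Real.rpow_pos_of_pos hs _
    have hu0 : (0:ℝ) < |u| ^ (p - 1) := Real.rpow_pos_of_pos (abs_pos.mpr hu) _
    rcases lt_or_gt_of_ne hu with hun | hup
    · -- u < 0 : s*u > u, so φ(s*u) > φ(u)
      have hlt : u < s * u := by
        have := mul_lt_mul_of_neg_right hs1 hun
        simpa using this
      have hmm := hmono (Set.mem_setOf.mpr hu) (Set.mem_setOf.mpr hsu) hlt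
      have hC : (0:ℝ) < f (s * u) / |s * u| ^ (p - 1) - f u / |u| ^ (p - 1) :=
        sub_pos.mpr hmm
      have hA : u * |u| ^ (p - 1) * s ^ (p - 1) < 0 :=
        mul_neg_of_neg_of_pos (mul_neg_of_neg_of_pos hun hu0) hs0
      exact mul_neg_of_neg_of_pos hA hC
    · -- u > 0 : s*u < u, so φ(s*u) < φ(u)
      have hlt : s * u < u := by
        have := mul_lt_mul_of_pos_right hs1 hup
        simpa using this
      have hmm := hmono (Set.mem_setOf.mpr hsu) (Set.mem_setOf.mpr hu) hlt
      have hC : f (s * u) / |s * u| ^ (p - 1) - f u / |u| ^ (p - 1) < 0 :=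
        sub_neg.mpr hmm
      have hA : (0:ℝ) < u * |u| ^ (p - 1) * s ^ (p - 1) :=
        mul_pos (mul_pos hup hu0) hs0
      exact mul_neg_of_pos_of_neg hA hC
  have hsign_pos : ∀ s : ℝ, 1 < s → u ≠ 0 →
      0 < u * f (s * u) - s ^ (p - 1) * (f u * u) := by
    intro s hs1 hu
    have hs : (0:ℝ) < s := lt_trans one_pos hs1
    rw [key s hs hu]
    have hsu : s * u ≠ 0 := mul_ne_zero hs.ne' hu
    have hs0 : (0:ℝ) < s ^ (p - 1) := Real.rpow_pos_of_pos hs _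
    have hu0 : (0:ℝ) < |u| ^ (p - 1) := Real.rpow_pos_of_pos (abs_pos.mpr hu) _
    rcases lt_or_gt_of_ne hu with hun | hup
    · have hlt : s * u < u := by
        have := mul_lt_mul_of_neg_right hs1 hun
        simpa using this
      have hmm := hmono (Set.mem_setOf.mpr hsu) (Set.mem_setOf.mpr hu) hlt
      have hC : f (s * u) / |s * u| ^ (p - 1) - f u / |u| ^ (p - 1) < 0 :=
        sub_neg.mpr hmm
      have hA : u * |u| ^ (p - 1) * s ^ (p - 1) < 0 :=
        mul_neg_of_neg_of_pos (mul_neg_of_neg_of_pos hun hu0) hs0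
      exact mul_pos_of_neg_of_neg hA hC
    · have hlt : u < s * u := by
        have := mul_lt_mul_of_pos_right hs1 hup
        simpa using this
      have hmm := hmono (Set.mem_setOf.mpr hu) (Set.mem_setOf.mpr hsu) hlt
      have hC : (0:ℝ) < f (s * u) / |s * u| ^ (p - 1) - f u / |u| ^ (p - 1) :=
        sub_pos.mpr hmm
      have hA : (0:ℝ) < u * |u| ^ (p - 1) * s ^ (p - 1) :=
        mul_pos (mul_pos hup hu0) hs0
      exact mul_pos hA hC
  -- the main positivity result
  have hmain : u ≠ 0 → t ≠ 1 → 0 < g t := by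
    intro hu ht1
    rcases lt_or_gt_of_ne ht1 with htl | htg
    · have hanti : StrictAntiOn g (Set.Icc t 1) := by
        apply strictAntiOn_of_deriv_neg (convex_Icc t 1)
        · intro x hx
          exact (hder x (lt_of_lt_of_le ht hx.1)).continuousAt.continuousWithinAt
        · intro x hx
          rw [interior_Icc] at hx
          rw [(hder x (lt_trans ht hx.1)).deriv]
          exact hsign_neg x (lt_trans ht hx.1) hx.2 hu
      have := hanti (Set.left_mem_Icc.mpr htl.le) (Set.right_mem_Icc.mpr htl.le) htl
      rwa [hg1] at this
    · have hmono' : StrictMonoOn g (Set.Icc 1 t) := by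
        apply strictMonoOn_of_deriv_pos (convex_Icc 1 t)
        · intro x hx
          exact (hder x (lt_of_lt_of_le one_pos hx.1)).continuousAt.continuousWithinAt
        · intro x hx
          rw [interior_Icc] at hx
          rw [(hder x (lt_trans one_pos hx.1)).deriv]
          exact hsign_pos x hx.1 hu
      have := hmono' (Set.left_mem_Icc.mpr htg.le) (Set.right_mem_Icc.mpr htg.le) htg
      rwa [hg1] at this
  have hzero : (1 - t) * u = 0 → g t = 0 := by
    intro h
    rcases mul_eq_zero.mp h with h1 | h2
    · have : t = 1 := by linarith [sub_eq_zero.mp h1]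
      rw [this] at *
      exact hg1
    · simp [hgdef, h2, hF 0]
  constructor
  · by_cases hu : u = 0
    · have := hzero (by rw [hu, mul_zero])
      rw [hgdef] at this; linarith [this]
    · by_cases ht1 : t = 1
      · have : g t = 0 := by rw [ht1]; exact hg1
        rw [hgdef] at this; linarith [this]
      · have := hmain hu ht1
        rw [hgdef] at this; linarith [this]
  · constructor
    · intro h0
      by_contra hne
      have hu : u ≠ 0 := fun h => hne (by rw [h, mul_zero])
      have ht1 : t ≠ 1 := fun h => hne (by rw [h]; ring)
      have := hmain hu ht1
      rw [hgdef] at this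
      simp only at this
      linarith [this]
    · intro h
      have := hzero h
      rw [hgdef] at this
      simpa using this
end
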